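/- Let P be a finite point set in general position, γ an optimal proper coloring of D(P), and suppose S₁,…,S_r are r distinct color classes of γ each of which is a star with apex v₁,…,v_r respectively (all v_i distinct points of P). Then χ(D(P ∖ {v₁,…,v_r})) = χ(D(P)) − r. -/

import Mathlib

open scoped Classical

/-- The closed segment associated to an unordered pair of points. -/
noncomputable def seg : Sym2 (ℝ × ℝ) → Set (ℝ × ℝ) :=
  Sym2.lift ⟨fun p q => segment ℝ p q, fun p q => segment_symm ℝ p q⟩

lemma seg_nonempty (s : Sym2 (ℝ × ℝ)) : (seg s).Nonempty := by
  induction s using Sym2.ind with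
  | _ p q => exact ⟨p, by simp [seg, left_mem_segment]⟩

/-- A point set is in general position if no three (distinct) of its points are collinear. -/
def GenPos (P : Set (ℝ × ℝ)) : Prop :=
  ∀ a ∈ P, ∀ b ∈ P, ∀ c ∈ P, a ≠ b → a ≠ c → b ≠ c →
    ¬ Collinear ℝ ({a, b, c} : Set (ℝ × ℝ))

/-- A point set is in convex position if every point is a vertex of the convex hull. -/
def ConvexPos (P : Set (ℝ × ℝ)) : Prop :=
  ∀ p ∈ P, p ∉ convexHull ℝ (P \ {p})

/-- Vertices of the disjointness graph: unordered pairs of distinct points of `P`. -/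
def SegOn (P : Set (ℝ × ℝ)) : Type :=
  {s : Sym2 (ℝ × ℝ) // (∀ p ∈ s, p ∈ P) ∧ ¬ s.IsDiag}

/-- The disjointness graph of segments of `P`: segments adjacent iff disjoint. -/
noncomputable def DisjGraph (P : Set (ℝ × ℝ)) : SimpleGraph (SegOn P) where
  Adj a b := seg a.1 ∩ seg b.1 = ∅
  symm := by
    constructor
    intro a b h
    show seg b.1 ∩ seg a.1 = ∅
    rwa [Set.inter_comm]
  loopless := by
    constructor
    intro a h
    change seg a.1 ∩ seg a.1 = ∅ at h
    rw [Set.inter_self] at h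
    exact (seg_nonempty a.1).ne_empty h

/-- Two (unordered pairs of points seen as) segments cross if they intersect
but share no endpoint. -/
def Crosses (s t : Sym2 (ℝ × ℝ)) : Prop :=
  (seg s ∩ seg t).Nonempty ∧ ∀ p, p ∈ s → p ∉ t

/-- A colour class is a star if no two of its segments cross. -/
def IsStarClass {P : Set (ℝ × ℝ)} {α : Type} (γ : (DisjGraph P).Coloring α) (c : α) : Prop :=
  ∀ s t : SegOn P, γ s = c → γ t = c → ¬ Crosses s.1 t.1

/-- `v` is an apex of the colour class `c`: every segment of the class is incident with `v`. -/
def IsApex {P : Set (ℝ × ℝ)} {α : Type} (γ : (DisjGraph P).Coloring α) (c : α) (v : ℝ × ℝ) : Prop :=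
  ∀ s : SegOn P, γ s = c → v ∈ s.1


theorem stmt2 (P : Finset (ℝ × ℝ)) (hgp : GenPos ↑P) (m r : ℕ)
    (γ : (DisjGraph ↑P).Coloring (Fin m))
    (hopt : (DisjGraph (↑P : Set (ℝ × ℝ))).chromaticNumber = (m : ℕ∞))
    (v : Fin r → ℝ × ℝ) (c : Fin r → Fin m)
    (hv : Function.Injective v) (hvP : ∀ i, v i ∈ P)
    (hc : Function.Injective c)
    (hne : ∀ i, ∃ s, γ s = c i)
    (hstar : ∀ i, IsStarClass γ (c i))
    (happ : ∀ i, IsApex γ (c i) (v i)) :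
    (DisjGraph ((↑P : Set (ℝ × ℝ)) \ Set.range v)).chromaticNumber
      = (m : ℕ∞) - (r : ℕ∞) := by
  classical
  have hrm : r ≤ m := by
    simpa using Fintype.card_le_of_injective c hc
  set V := Set.range v with hV
  set Q := ((↑P : Set (ℝ × ℝ)) \ V) with hQ
  -- lift from SegOn Q to SegOn P
  have hlift : ∀ s : SegOn Q, (∀ p ∈ s.1, p ∈ (↑P : Set (ℝ × ℝ))) ∧ ¬ s.1.IsDiag :=
    fun s => ⟨fun p hp => (s.2.1 p hp).1, s.2.2⟩
  have mem_seg : ∀ (p : ℝ × ℝ) (s : Sym2 (ℝ × ℝ)), p ∈ s → p ∈ seg s := by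
    intro p s h
    induction s using Sym2.ind with
    | _ a b =>
      rcases Sym2.mem_iff.mp h with rfl | rfl
      · simpa [seg] using left_mem_segment ℝ p b
      · simpa [seg] using right_mem_segment ℝ a p
  -- Step 1: the small graph is (m-r)-colorable
  have hnotc : ∀ s : SegOn Q, γ ⟨s.1, hlift s⟩ ∉ Set.range c := by
    rintro s ⟨i, hi⟩
    have hv' : v i ∈ s.1 := happ i ⟨s.1, hlift s⟩ hi.symm
    exact (s.2.1 (v i) hv').2 ⟨i, rfl⟩
  have hcard : Fintype.card {a : Fin m // a ∉ Set.range c} = m - r := by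
    rw [Fintype.card_subtype_compl]
    have h2 : Fintype.card {x : Fin m // x ∈ Set.range c} = r :=
      (Set.card_range_of_injective hc).trans (Fintype.card_fin r)
    rw [h2]
    simp
  have hcol1 : (DisjGraph Q).Colorable (m - r) := by
    let e := Fintype.equivFinOfCardEq hcard
    refine ⟨SimpleGraph.Coloring.mk (fun s => e ⟨γ ⟨s.1, hlift s⟩, hnotc s⟩) ?_⟩
    intro s t hadj heq
    have h1 : γ ⟨s.1, hlift s⟩ = γ ⟨t.1, hlift t⟩ :=
      congrArg Subtype.val (e.injective heq)
    have hadj' : (DisjGraph (↑P : Set (ℝ × ℝ))).Adj ⟨s.1, hlift s⟩ ⟨t.1, hlift t⟩ := hadj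
    exact γ.valid hadj' h1
  -- Step 2: lower bound
  have hstep2 : ∀ n : ℕ, (DisjGraph Q).Colorable n → m ≤ n + r := by
    rintro n ⟨δ⟩
    let f : SegOn (↑P : Set (ℝ × ℝ)) → Fin (n + r) := fun s =>
      if h : ∃ i, v i ∈ s.1 then Fin.natAdd n h.choose
      else Fin.castAdd r (δ ⟨s.1, ⟨fun p hp => ⟨s.2.1 p hp, fun hpV => h (by
        obtain ⟨i, hi⟩ := hpV; exact ⟨i, hi ▸ hp⟩)⟩, s.2.2⟩⟩)
    have hvalid : ∀ s t, (DisjGraph (↑P : Set (ℝ × ℝ))).Adj s t → f s ≠ f t := by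
      intro s t hadj heq
      have hdisj : seg s.1 ∩ seg t.1 = ∅ := hadj
      simp only [f] at heq
      split_ifs at heq with hs ht ht
      · -- both pass through some v i
        have hij : hs.choose = ht.choose := by
          have := congrArg Fin.val heq
          simp only [Fin.natAdd] at this
          exact Fin.ext (by omega)
        have h1 : v hs.choose ∈ seg s.1 := mem_seg _ _ hs.choose_spec
        have h2 : v hs.choose ∈ seg t.1 := by
          rw [hij]; exact mem_seg _ _ ht.choose_spec
        exact absurd hdisj (Set.nonempty_iff_ne_empty.mp ⟨_, h1, h2⟩)
      · have := congrArg Fin.val heq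
        simp only [Fin.natAdd, Fin.castAdd, Fin.castLE] at this
        omega
      · have := congrArg Fin.val heq
        simp only [Fin.natAdd, Fin.castAdd, Fin.castLE] at this
        omega
      · have hval := congrArg Fin.val heq
        simp only [Fin.castAdd, Fin.castLE] at hval
        exact δ.valid (by exact hdisj) (Fin.ext hval)
    have hcol : (DisjGraph (↑P : Set (ℝ × ℝ))).Colorable (n + r) :=
      ⟨SimpleGraph.Coloring.mk f (fun {s t} hadj => hvalid s t hadj)⟩
    have := hcol.chromaticNumber_le
    rw [hopt] at this
    exact_mod_cast this
  -- Conclude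
  have hsub : ((m : ℕ∞) - (r : ℕ∞)) = ((m - r : ℕ) : ℕ∞) := by
    exact (ENat.coe_sub m r).symm
  rw [hsub]
  refine le_antisymm ?_ ?_
  · exact hcol1.chromaticNumber_le
  · rw [hcol1.chromaticNumber_eq_sInf, Nat.cast_le]
    refine le_csInf ⟨m - r, hcol1⟩ ?_
    intro n hn
    have := hstep2 n hn
    omega
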